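/- arXiv:2109.08083 — 5 statements merged into one kernel-verified Lean document; each statement's English description precedes it below -/
import Mathlib

section
/- Let A be an n×n integer matrix such that the sum of entries in each row and in each column is zero. Then A can be written as a finite sum of 'simple' matrices, where a simple matrix is one with entries +1 at positions (a,c) and (b,d), entries -1 at positions (a,d) and (b,c) for some rows a≠b and columns c≠d, and 0 elsewhere. -/
/-!
Fix a row `r` and a column `s`. Each `simpleMatrix i r j s` is `E i j - E i s - E r j + E r s`,
so in `∑ i, ∑ j, A i j • simpleMatrix i r j s` the correction terms collect the row sums,
the column sums and the total sum of `A`, which all vanish: the sum is `A` itself. Since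
`-simpleMatrix a b c d = simpleMatrix b a c d`, the integer multiples of simple matrices
are sums of simple matrices, and the terms with `i = r` or `j = s` are zero.
-/

/-- The `simple` matrix determined by rows `a, b` and columns `c, d`: it has entry `+1`
at positions `(a,c)` and `(b,d)`, entry `-1` at positions `(a,d)` and `(b,c)`,
and `0` elsewhere (for `a ≠ b`, `c ≠ d`). -/
def simpleMatrix {n : ℕ} (a b c d : Fin n) : Matrix (Fin n) (Fin n) ℤ :=
  fun i j =>
    (if i = a ∧ j = c then 1 else 0) + (if i = b ∧ j = d then 1 else 0)
      - (if i = a ∧ j = d then 1 else 0) - (if i = b ∧ j = c then 1 else 0)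

/-- A matrix is simple if it is `simpleMatrix a b c d` for some rows `a ≠ b`, columns `c ≠ d`. -/
def IsSimple {n : ℕ} (M : Matrix (Fin n) (Fin n) ℤ) : Prop :=
  ∃ a b c d : Fin n, a ≠ b ∧ c ≠ d ∧ M = simpleMatrix a b c d

open Finset

namespace simpleMatrix

variable {n : ℕ}

theorem swap_rows (a b c d : Fin n) : simpleMatrix b a c d = -simpleMatrix a b c d := by
  ext i j
  simp only [simpleMatrix, Matrix.neg_apply]
  ring

theorem self_rows (a c d : Fin n) : simpleMatrix a a c d = 0 := by
  ext i j
  simp only [simpleMatrix, Matrix.zero_apply]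
  ring

theorem self_cols (a b c : Fin n) : simpleMatrix a b c c = 0 := by
  ext i j
  simp only [simpleMatrix, Matrix.zero_apply]
  ring

end simpleMatrix

theorem IsSimple.neg {n : ℕ} {M : Matrix (Fin n) (Fin n) ℤ} (hM : IsSimple M) :
    IsSimple (-M) := by
  obtain ⟨a, b, c, d, hab, hcd, rfl⟩ := hM
  exact ⟨b, a, c, d, hab.symm, hcd, (simpleMatrix.swap_rows a b c d).symm⟩

theorem simpleMatrix_mem_closure_isSimple {n : ℕ} (a b c d : Fin n) :
    simpleMatrix a b c d ∈ AddSubgroup.closure {M | IsSimple M} := by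
  by_cases hab : a = b
  · simp [hab, simpleMatrix.self_rows]
  by_cases hcd : c = d
  · simp [hcd, simpleMatrix.self_cols]
  exact AddSubgroup.subset_closure ⟨a, b, c, d, hab, hcd, rfl⟩

theorem exists_list_of_mem_closure_isSimple {n : ℕ} {A : Matrix (Fin n) (Fin n) ℤ}
    (hA : A ∈ AddSubgroup.closure {M | IsSimple M}) :
    ∃ L : List (Matrix (Fin n) (Fin n) ℤ), (∀ M ∈ L, IsSimple M) ∧ L.sum = A := by
  rw [← AddSubgroup.mem_toAddSubmonoid, AddSubgroup.closure_toAddSubmonoid] at hA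
  obtain ⟨L, hL, rfl⟩ := AddSubmonoid.exists_list_of_mem_closure hA
  refine ⟨L, fun M hM => ?_, rfl⟩
  rcases hL M hM with hsimple | hneg
  · exact hsimple
  · simpa using IsSimple.neg hneg

theorem eq_sum_smul_simpleMatrix {n : ℕ} {A : Matrix (Fin n) (Fin n) ℤ}
    (hrow : ∀ i, ∑ j, A i j = 0) (hcol : ∀ j, ∑ i, A i j = 0) (r s : Fin n) :
    A = ∑ i, ∑ j, A i j • simpleMatrix i r j s := by
  ext x y
  simp only [Matrix.sum_apply, Matrix.smul_apply, smul_eq_mul, simpleMatrix, ite_and, mul_sub,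
    mul_add, sum_sub_distrib, sum_add_distrib, mul_ite, mul_one, mul_zero]
  split_ifs <;> simp [hrow, hcol]

/-- Any integer matrix all of whose row sums and column sums are zero is a finite sum
of simple matrices. -/
theorem sum_of_simple_matrices (n : ℕ) (A : Matrix (Fin n) (Fin n) ℤ)
    (hrow : ∀ i, ∑ j, A i j = 0) (hcol : ∀ j, ∑ i, A i j = 0) :
    ∃ L : List (Matrix (Fin n) (Fin n) ℤ), (∀ M ∈ L, IsSimple M) ∧ L.sum = A := by
  apply exists_list_of_mem_closure_isSimple
  cases n with
  | zero => simp [Subsingleton.elim A 0]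
  | succ n =>
    rw [eq_sum_smul_simpleMatrix hrow hcol 0 0]
    exact sum_mem fun i _ => sum_mem fun j _ =>
      AddSubgroup.zsmul_mem _ (simpleMatrix_mem_closure_isSimple i 0 j 0) _
end

section
/- Let n ≥ 1 and let v : ZMod n → ℤ satisfy ∑_i v(i) = 0 (as integers) and ∑_i i·(v(i) mod n) = 0 in ZMod n. Then v lies in the integer span of the vectors e_a - e_b - e_c + e_{b+c-a} for a,b,c ∈ ZMod n. -/
/-!
Modulo the span `S` of the generators, `x ↦ e_x - e_0` is additive, since
`sqGen 0 x y = (e_{x+y} - e_0) - (e_x - e_0) - (e_y - e_0)`; so it induces a homomorphism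
`φ : ZMod n →+ (ZMod n → ℤ) ⧸ S`. Writing `v = ∑ v x • (e_x - e_0) + (∑ v x) • e_0`, the class of
`v` is `φ (∑ v x * x) + (∑ v x) • [e_0]`, which vanishes under the two hypotheses.
-/

/-- The indicator vector of `x : ZMod n`. -/
def eVec {n : ℕ} (x : ZMod n) : ZMod n → ℤ := fun i => if i = x then 1 else 0

/-- The SQ-generator `e_a - e_b - e_c + e_{b+c-a}`. -/
def sqGen {n : ℕ} (a b c : ZMod n) : ZMod n → ℤ :=
  fun i => eVec a i - eVec b i - eVec c i + eVec (b + c - a) i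

namespace SqSpan

variable {n : ℕ}

lemma sqGen_zero_left (x y : ZMod n) :
    sqGen 0 x y = (eVec (x + y) - eVec 0) - (eVec x - eVec 0) - (eVec y - eVec 0) := by
  funext i
  simp only [sqGen, sub_zero, add_comm x y, Pi.sub_apply]
  ring

lemma eq_sum_zsmul_eVec [NeZero n] (v : ZMod n → ℤ) : v = ∑ x, v x • eVec x := by
  funext i
  simp [eVec]

variable (n) in
abbrev sqSpan : AddSubgroup (ZMod n → ℤ) :=
  AddSubgroup.closure {w : ZMod n → ℤ | ∃ a b c : ZMod n, w = sqGen a b c}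

lemma sqGen_mem_sqSpan (a b c : ZMod n) : sqGen a b c ∈ sqSpan n :=
  AddSubgroup.subset_closure ⟨a, b, c, rfl⟩

variable (n) in
def eDiffClass : ZMod n →+ (ZMod n → ℤ) ⧸ sqSpan n :=
  AddMonoidHom.mk' (fun x => ((eVec x - eVec 0 : ZMod n → ℤ) : (ZMod n → ℤ) ⧸ sqSpan n))
    fun x y => by
      have h := (QuotientAddGroup.eq_zero_iff _).mpr (sqGen_mem_sqSpan 0 x y)
      rw [sqGen_zero_left, QuotientAddGroup.mk_sub, QuotientAddGroup.mk_sub,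
        sub_eq_zero, sub_eq_iff_eq_add] at h
      rw [h, add_comm]

lemma mk_eVec (x : ZMod n) :
    ((eVec x : ZMod n → ℤ) : (ZMod n → ℤ) ⧸ sqSpan n) = eDiffClass n x + ↑(eVec (0 : ZMod n)) := by
  rw [eDiffClass, AddMonoidHom.mk'_apply, QuotientAddGroup.mk_sub, sub_add_cancel]

lemma mk_eq_eDiffClass_add [NeZero n] (v : ZMod n → ℤ) :
    (v : (ZMod n → ℤ) ⧸ sqSpan n) =
      eDiffClass n (∑ x, (v x : ZMod n) * x) + (∑ x, v x) • ↑(eVec (0 : ZMod n)) := by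
  have hx (x : ZMod n) : ((v x • eVec x : ZMod n → ℤ) : (ZMod n → ℤ) ⧸ sqSpan n) =
      eDiffClass n ((v x : ZMod n) * x) + v x • ↑(eVec (0 : ZMod n)) := by
    rw [QuotientAddGroup.mk_zsmul, mk_eVec x, zsmul_add, ← map_zsmul, zsmul_eq_mul]
  conv_lhs => rw [eq_sum_zsmul_eVec v]
  rw [QuotientAddGroup.mk_sum, Finset.sum_congr rfl fun x _ => hx x, Finset.sum_add_distrib,
    ← map_sum, ← Finset.sum_smul]

end SqSpan

open SqSpan in
/-- If `v : ZMod n → ℤ` satisfies `∑ v i = 0` (in `ℤ`) and `∑ i • v i = 0` in `ZMod n`, then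
`v` lies in the integer span of the vectors `e_a - e_b - e_c + e_{b+c-a}`. -/
theorem mem_span_of_zero_sums (n : ℕ) [NeZero n] (v : ZMod n → ℤ)
    (h1 : ∑ i : ZMod n, v i = 0)
    (h2 : ∑ i : ZMod n, (v i : ZMod n) * i = 0) :
    v ∈ AddSubgroup.closure {w : ZMod n → ℤ | ∃ a b c : ZMod n, w = sqGen a b c} := by
  rw [← QuotientAddGroup.eq_zero_iff, mk_eq_eDiffClass_add, h1, h2, map_zero, zero_smul, add_zero]
end

section
/- Suppose the complete toroidal n-queens system admits a perfect matching, that is, there exists a permutation σ of ZMod n such that i ↦ i + σ(i) and i ↦ i - σ(i) are both bijections of ZMod n. Then n is coprime to 6. -/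
/-!
Sums over `ZMod n` are unchanged by permutations, so summing `i + σ i` gives `∑ i = 0`, and
summing the parallelogram identity `(i + σ i)² + (i - σ i)² = 2 i² + 2 (σ i)²` gives
`2 ∑ i² = 0`.
Computed in `ℕ`, `∑_{k<n} k = n(n-1)/2` is divisible by `n` only for odd `n`, and then
`∑_{k<n} k² = n(n-1)(2n-1)/6` is divisible by `n` only if `3 ∤ n`.
-/

open Finset Function

section Sums

variable {R : Type*} [Fintype R]

theorem sum_univ_eq_zero_of_bijective_add_perm [AddCommGroup R] (σ : Equiv.Perm R)
    (hadd : Bijective fun x => x + σ x) : ∑ x : R, x = 0 := by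
  have h : ∑ x, (x + σ x) = ∑ x, x := hadd.sum_comp id
  rwa [sum_add_distrib, Equiv.sum_comp σ (fun x => x), add_eq_left] at h

theorem two_mul_sum_sq_eq_zero_of_bijective_add_sub [CommRing R] (σ : Equiv.Perm R)
    (hadd : Bijective fun x => x + σ x) (hsub : Bijective fun x => x - σ x) :
    2 * ∑ x : R, x ^ 2 = 0 := by
  have parallelogram : ∑ x : R, ((x + σ x) ^ 2 + (x - σ x) ^ 2) = 4 * ∑ x, x ^ 2 := by
    calc ∑ x : R, ((x + σ x) ^ 2 + (x - σ x) ^ 2) = ∑ x, (2 * x ^ 2 + 2 * σ x ^ 2) :=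
          sum_congr rfl fun x _ => by ring
      _ = 4 * ∑ x, x ^ 2 := by
          rw [sum_add_distrib, ← mul_sum, ← mul_sum, Equiv.sum_comp σ (· ^ 2)]; ring
  rw [sum_add_distrib, hadd.sum_comp (· ^ 2), hsub.sum_comp (· ^ 2)] at parallelogram
  linear_combination -parallelogram

end Sums

theorem ZMod.natCast_sum_range_pow (n p : ℕ) [NeZero n] :
    ((∑ k ∈ range n, k ^ p : ℕ) : ZMod n) = ∑ i : ZMod n, i ^ p := by
  push_cast
  refine sum_nbij' (fun k : ℕ => (k : ZMod n)) ZMod.val (fun _ _ => mem_univ _)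
    (fun i _ => mem_range.2 (ZMod.val_lt i)) (fun k hk => ZMod.val_cast_of_lt (mem_range.1 hk))
    (fun i _ => ZMod.natCast_zmod_val i) (fun _ _ => rfl)

theorem Nat.sum_range_succ_sq_mul_six (n : ℕ) :
    (∑ k ∈ range (n + 1), k ^ 2) * 6 = n * (n + 1) * (2 * n + 1) := by
  induction n with
  | zero => simp
  | succ m ih => rw [sum_range_succ, add_mul, ih]; ring

theorem Nat.odd_of_dvd_sum_range_id {n : ℕ} (hn : 0 < n) (h : n ∣ ∑ k ∈ range n, k) :
    Odd n := by
  have : n * 2 ∣ n * (n - 1) := sum_range_id_mul_two n ▸ mul_dvd_mul_right h 2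
  have : 2 ∣ n - 1 := (Nat.mul_dvd_mul_iff_left hn).1 this
  rw [Nat.odd_iff]
  omega

theorem Nat.not_three_dvd_of_dvd_sum_range_sq {n : ℕ} (hn : 0 < n)
    (h : n ∣ ∑ k ∈ range n, k ^ 2) : ¬ 3 ∣ n := by
  obtain ⟨m, rfl⟩ : ∃ m, n = m + 1 := ⟨n - 1, by omega⟩
  have : (m + 1) * 6 ∣ (m + 1) * (m * (2 * m + 1)) := by
    have := mul_dvd_mul_right h 6
    rwa [sum_range_succ_sq_mul_six, mul_comm m, mul_assoc] at this
  have : 3 ∣ m * (2 * m + 1) :=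
    (by norm_num : 3 ∣ 6).trans (Nat.dvd_of_mul_dvd_mul_left hn this)
  rcases (Nat.prime_three.dvd_mul).1 this with h3 | h3 <;> omega

/-- If there is a toroidal `n`-queens solution, i.e. a permutation `σ` of `ZMod n` such that
`i ↦ i + σ i` and `i ↦ i - σ i` are both bijections of `ZMod n`, then `n` is coprime to `6`. -/
theorem coprime_six_of_toroidal_solution (n : ℕ) (hn : 0 < n) (σ : Equiv.Perm (ZMod n))
    (hsum : Function.Bijective (fun i : ZMod n => i + σ i))
    (hdiff : Function.Bijective (fun i : ZMod n => i - σ i)) :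
    Nat.Coprime n 6 := by
  have : NeZero n := ⟨hn.ne'⟩
  have hodd : Odd n := by
    refine Nat.odd_of_dvd_sum_range_id hn ?_
    have := ZMod.natCast_sum_range_pow n 1
    simp only [pow_one] at this
    rw [← ZMod.natCast_eq_zero_iff, this, sum_univ_eq_zero_of_bijective_add_perm σ hsum]
  have hcop2 : n.Coprime 2 := Nat.coprime_two_right.2 hodd
  have hsq : n ∣ ∑ k ∈ range n, k ^ 2 := by
    refine hcop2.dvd_of_dvd_mul_left ?_
    rw [← ZMod.natCast_eq_zero_iff, Nat.cast_mul, ZMod.natCast_sum_range_pow, Nat.cast_two,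
      two_mul_sum_sq_eq_zero_of_bijective_add_sub σ hsum hdiff]
  have hcop3 : n.Coprime 3 :=
    (Nat.prime_three.coprime_iff_not_dvd.2 (Nat.not_three_dvd_of_dvd_sum_range_sq hn hsq)).symm
  exact hcop2.mul_right hcop3
end

section
/- If n is odd, then the map i ↦ 2i is a bijection on ZMod n, and consequently σ = id, i.e. σ(i) = i, is a permutation of ZMod n with i ↦ i + σ(i) a bijection, so it defines a toroidal semi-queens solution; hence a toroidal semi-queens solution exists if and only if n is odd. -/
lemma zmod_sum_eq (n : ℕ) [NeZero n] :
    (∑ i : ZMod n, i) = ((n * (n-1) / 2 : ℕ) : ZMod n) := by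
  have h : (∑ i : ZMod n, i) = ∑ k ∈ Finset.range n, ((k : ℕ) : ZMod n) := by
    rw [Finset.sum_bij (fun k hk => ((k : ℕ) : ZMod n))]
    · intro a _; exact Finset.mem_univ _
    · intro a ha b hb hab
      rwa [ZMod.natCast_eq_natCast_iff', Nat.mod_eq_of_lt (Finset.mem_range.mp ha),
        Nat.mod_eq_of_lt (Finset.mem_range.mp hb)] at hab
    · intro b _
      exact ⟨b.val, Finset.mem_range.mpr (ZMod.val_lt b), (ZMod.natCast_rightInverse b)⟩
    · intro a _; rfl
  rw [h, ← Nat.cast_sum, Finset.sum_range_id]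


/-- A toroidal semi-queens solution (a permutation `σ` of `ZMod n` with `i ↦ i + σ i`
a bijection) exists if and only if `n` is odd. -/
theorem semiqueens_solution_iff_odd (n : ℕ) (hn : 0 < n) :
    (∃ σ : Equiv.Perm (ZMod n), Function.Bijective (fun i : ZMod n => i + σ i)) ↔ Odd n := by
  haveI : NeZero n := ⟨hn.ne'⟩
  constructor
  · rintro ⟨σ, hb⟩
    by_contra hodd
    obtain ⟨m, hm⟩ := Nat.not_odd_iff_even.mp hodd
    have hn2 : n = 2 * m := by omega
    have hm0 : 0 < m := by omega
    have h1 : ∑ i : ZMod n, (i + σ i) = ∑ i : ZMod n, i :=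
      hb.sum_comp (id : ZMod n → ZMod n)
    have h2 : ∑ i : ZMod n, σ i = ∑ i : ZMod n, i :=
      Fintype.sum_equiv σ _ _ (fun i => rfl)
    rw [Finset.sum_add_distrib, h2] at h1
    have hS : (∑ i : ZMod n, i) = 0 :=
      add_right_cancel (b := ∑ i : ZMod n, i)
        (h1.trans (zero_add (∑ i : ZMod n, i)).symm)
    rw [zmod_sum_eq n, ZMod.natCast_eq_zero_iff] at hS
    have heq : n * (n - 1) / 2 = m * (n - 1) := by
      rw [hn2, mul_assoc, Nat.mul_div_cancel_left _ two_pos]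
    rw [heq] at hS
    obtain ⟨k, hk⟩ := hS
    have hk' : m * (n - 1) = m * (2 * k) := by rw [hk, hn2]; ring
    have := Nat.eq_of_mul_eq_mul_left hm0 hk'
    omega
  · intro hodd
    refine ⟨Equiv.refl _, ?_⟩
    have hu : IsUnit (2 : ZMod n) := by
      rw [show (2 : ZMod n) = ((2 : ℕ) : ZMod n) by norm_cast, ZMod.isUnit_iff_coprime]
      exact Nat.coprime_two_left.mpr hodd
    have hinj : Function.Injective (fun i : ZMod n => i + i) := by
      intro a b hab
      simp only [← two_mul] at hab
      exact hu.mul_left_cancel hab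
    exact Finite.injective_iff_bijective.mp hinj
end

section
/- Let n be a sufficiently large natural number and 0 < α < 1. Setting p(i) = 1 - i/n, the sum ∑_{i=0}^{⌊n - n^{1-α}⌋ - 1} log(p(i)) equals -n + O(n^{1-α} log n); precisely, |∑_{i=0}^{⌊n-n^{1-α}⌋-1} log(1 - i/n) + n| ≤ C · n^{1-α} · log n for some constant C and all large n. -/
/-!
The sum is `log (n! / k!) - m log n` with `m = ⌊n - n^{1-α}⌋` and `k = n - m ≤ n^{1-α} + 1`.
Two-sided Stirling bounds `n log n - n ≤ log n! ≤ n log n - n + (log n) / 2 + 1`, together with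
`0 ≤ log k! ≤ k log n`, place the sum plus `n` between `0` and `(k + 1) log n + 1`.
-/

open Real Finset
open scoped Nat

/-- `stirlingSeq` decreases from `stirlingSeq 1 = e / √2`. -/
theorem Stirling.log_factorial_le_stirling {n : ℕ} (hn : n ≠ 0) :
    log n ! ≤ n * log n - n + log n / 2 + 1 := by
  obtain ⟨k, rfl⟩ := Nat.exists_eq_succ_of_ne_zero hn
  have hseq : stirlingSeq (k + 1) ≤ exp 1 / √2 :=
    stirlingSeq_one ▸ stirlingSeq'_antitone (Nat.zero_le k)
  have hlog := log_le_log (stirlingSeq'_pos k) hseq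
  have hk : (0 : ℝ) < (k + 1 : ℕ) := by positivity
  rw [log_stirlingSeq_formula, log_div (exp_pos 1).ne' (by positivity), log_exp,
    log_sqrt zero_le_two, log_mul two_ne_zero hk.ne', log_div hk.ne' (exp_pos 1).ne',
    log_exp] at hlog
  linarith

theorem log_factorial_le_mul_log {k n : ℕ} (hkn : k ≤ n) : log k ! ≤ k * log n := by
  rw [← log_pow]
  exact log_le_log (by positivity) <| by
    exact_mod_cast k.factorial_le_pow.trans (Nat.pow_le_pow_left hkn k)

theorem sum_range_log_one_sub_div {m n : ℕ} (hmn : m ≤ n) :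
    ∑ i ∈ range m, log (1 - i / n) = log n ! - log (n - m)! - m * log n := by
  have hlt : ∀ i ∈ range m, i < n := fun i hi => (mem_range.mp hi).trans_le hmn
  have hsub : ∀ i ∈ range m, (0 : ℝ) < (n - i : ℕ) := fun i hi =>
    Nat.cast_pos.mpr (Nat.sub_pos_of_lt (hlt i hi))
  have hterm : ∀ i ∈ range m, log (1 - i / n) = log ((n - i : ℕ) : ℝ) - log n := fun i hi => by
    have hn : (n : ℝ) ≠ 0 := by exact_mod_cast (hlt i hi).ne_bot
    rw [← log_div (hsub i hi).ne' hn, Nat.cast_sub (hlt i hi).le, one_sub_div hn]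
  have hdesc : (n.descFactorial m : ℝ) ≠ 0 := by
    exact_mod_cast (Nat.descFactorial_pos.mpr hmn).ne'
  rw [sum_congr rfl hterm, sum_sub_distrib, ← log_prod fun i hi => (hsub i hi).ne',
    ← Nat.cast_prod, ← Nat.descFactorial_eq_prod_range, ← Nat.factorial_mul_descFactorial hmn,
    Nat.cast_mul, log_mul (by positivity) hdesc, sum_const, card_range, nsmul_eq_mul]
  ring

theorem abs_sum_range_log_one_sub_div_add_le {m n : ℕ} (hmn : m ≤ n) :
    |∑ i ∈ range m, log (1 - i / n) + n| ≤ (n - m + 1) * log n + 1 := by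
  obtain rfl | hn := eq_or_ne n 0
  · simp [Nat.le_zero.mp hmn]
  have hlog_n : 0 ≤ log n := log_natCast_nonneg n
  have hlog_two_pi : 0 ≤ log (2 * π) := log_nonneg (by linarith [pi_gt_three])
  have hlower := Stirling.le_log_factorial_stirling hn
  have hupper := Stirling.log_factorial_le_stirling hn
  have htail_nonneg : 0 ≤ log (n - m)! := log_natCast_nonneg _
  have htail_le := log_factorial_le_mul_log (Nat.sub_le n m)
  rw [Nat.cast_sub hmn] at htail_le
  rw [sum_range_log_one_sub_div hmn, abs_le]
  constructor <;> linarith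

theorem sum_log_p_asymptotics_general (α : ℝ) (h1 : α < 1) :
    ∃ C : ℝ, ∃ N : ℕ, ∀ n : ℕ, N ≤ n →
      |(∑ i ∈ Finset.range ⌊(n : ℝ) - (n : ℝ) ^ (1 - α)⌋₊, Real.log (1 - (i : ℝ) / n)) + n| ≤
        C * (n : ℝ) ^ (1 - α) * Real.log n := by
  refine ⟨4, 3, fun n hn => ?_⟩
  have hn' : (3 : ℝ) ≤ n := by exact_mod_cast hn
  set x := (n : ℝ) ^ (1 - α)
  have hx : 1 ≤ x := one_le_rpow (by linarith) (by linarith)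
  have hlog : 1 ≤ log n := by
    rw [le_log_iff_exp_le (by linarith)]
    linarith [exp_one_lt_d9]
  have hm_le : ⌊(n : ℝ) - x⌋₊ ≤ n := Nat.floor_le_of_le (by linarith)
  have hm_gt := Nat.lt_floor_add_one ((n : ℝ) - x)
  calc _ ≤ (n - ⌊(n : ℝ) - x⌋₊ + 1) * log n + 1 := abs_sum_range_log_one_sub_div_add_le hm_le
    _ ≤ (x + 2) * log n + 1 := by gcongr ?_ * _ + _; linarith
    _ ≤ 4 * x * log n := by nlinarith

/-- For fixed `0 < α < 1`, with `p i = 1 - i / n`, we have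
`∑_{i=0}^{⌊n - n^{1-α}⌋ - 1} log (p i) = -n + O(n^{1-α} log n)` as `n → ∞`. -/
theorem sum_log_p_asymptotics (α : ℝ) (h0 : 0 < α) (h1 : α < 1) :
    ∃ C : ℝ, ∃ N : ℕ, ∀ n : ℕ, N ≤ n →
      |(∑ i ∈ Finset.range ⌊(n : ℝ) - (n : ℝ) ^ (1 - α)⌋₊, Real.log (1 - (i : ℝ) / n)) + n| ≤
        C * (n : ℝ) ^ (1 - α) * Real.log n :=
  sum_log_p_asymptotics_general α h1
end
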